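/- For any finite graph G = (V,E) and any subgraph T of G which is a forest, ν(G) ≤ |∂T| / |T|, where ∂T ⊂ E is the set of edges connecting vertices of T with vertices of V \ T. -/

import Mathlib

open Finset

variable {V : Type*} [Fintype V] {W : Type*} [Fintype W]

open scoped Classical in
noncomputable def magEnergy (G : SimpleGraph V) (σ : V → V → ℂ) (f : V → ℂ) : ℝ :=
  (1/2) * ∑ x : V, ∑ y : V, if G.Adj x y then ‖f x - σ x y * f y‖ ^ 2 else 0

noncomputable def magDenom (f : V → ℂ) : ℝ := ∑ x : V, ‖f x‖ ^ 2

noncomputable def lambda1 (G : SimpleGraph V) (σ : V → V → ℂ) : ℝ :=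
  sInf { r : ℝ | ∃ f : V → ℂ, f ≠ 0 ∧ r = magEnergy G σ f / magDenom f }

def IsMagPotential (G : SimpleGraph V) (σ : V → V → ℂ) : Prop :=
  (∀ x y, G.Adj x y → ‖σ x y‖ = 1) ∧
  (∀ x y, G.Adj x y → σ y x = (σ x y)⁻¹)

noncomputable def magHeight (G : SimpleGraph V) : ℝ :=
  sSup { r : ℝ | ∃ σ : V → V → ℂ, IsMagPotential G σ ∧ r = lambda1 G σ }

open scoped Classical in
noncomputable def magLap (G : SimpleGraph V) (σ : V → V → ℂ) (f : V → ℂ) : V → ℂ :=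
  fun x => ∑ y : V, if G.Adj x y then f x - σ x y * f y else 0

/-!
On a forest every magnetic potential is a pure gauge: transporting phases along the unique paths
from a root of each component gives a unimodular `f` on `S` with `f x = σ x y * f y` on every edge
inside `S`. Extended by zero outside `S`, such an `f` has energy exactly one per boundary edge and
squared norm `|S|`, so it is a test function witnessing `λ₁^σ(G) ≤ |∂S| / |S|` for every `σ`.
-/

namespace SimpleGraph

variable {α M : Type*} {H : SimpleGraph α}

section Phase

variable [Monoid M] (τ : α → α → M)

noncomputable def Walk.phase {a b : α} (w : H.Walk a b) : M :=
  (w.darts.map fun d => τ d.fst d.snd).prod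

@[simp]
theorem Walk.phase_concat {a b c : α} (w : H.Walk a b) (h : H.Adj b c) :
    (w.concat h).phase τ = w.phase τ * τ b c := by
  simp [Walk.phase, Walk.darts_concat]

@[simp]
theorem Walk.phase_copy {a b a' b' : α} (w : H.Walk a b) (ha : a = a') (hb : b = b') :
    (w.copy ha hb).phase τ = w.phase τ := by
  simp [Walk.phase, Walk.darts_copy]

theorem Walk.phase_mem {P : Submonoid M} (hP : ∀ x y, H.Adj x y → τ x y ∈ P) {a b : α}
    (w : H.Walk a b) : w.phase τ ∈ P :=
  Submonoid.list_prod_mem _ <| by simpa using fun d _ => hP _ _ d.adj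

/-- In a forest, of two paths from `r` to adjacent vertices one extends the other by that edge. -/
theorem IsAcyclic.phase_eq_mul_of_adj (hH : H.IsAcyclic)
    (hτ : ∀ x y, H.Adj x y → τ x y * τ y x = 1) {r x y : α} (p : H.Path r x) (q : H.Path r y)
    (hxy : H.Adj x y) : q.1.phase τ = p.1.phase τ * τ x y := by
  classical
  by_cases hx : x ∈ q.1.support
  · rw [hH.path_concat p.2 q.2 hxy hx, Walk.phase_concat]
  · have hy := hH.mem_support_of_ne_mem_support_of_adj_of_isPath p.2 q.2 hxy hx
    rw [hH.path_concat q.2 p.2 hxy.symm hy, Walk.phase_concat, mul_assoc, hτ y x hxy.symm,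
      mul_one]

end Phase

open scoped Classical in
noncomputable def pathFromRoot (H : SimpleGraph α) (x : α) :
    H.Path (H.connectedComponentMk x).out x :=
  (ConnectedComponent.exact (Quot.out_eq (H.connectedComponentMk x))).some.toPath

noncomputable def rootTransport [Monoid M] (H : SimpleGraph α) (τ : α → α → M) (x : α) : M :=
  (H.pathFromRoot x).1.phase τ

variable [Monoid M] (τ : α → α → M)

theorem rootTransport_mem {P : Submonoid M} (hP : ∀ x y, H.Adj x y → τ x y ∈ P) (x : α) :
    H.rootTransport τ x ∈ P :=
  Walk.phase_mem τ hP _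

theorem IsAcyclic.rootTransport_of_adj (hH : H.IsAcyclic)
    (hτ : ∀ x y, H.Adj x y → τ x y * τ y x = 1) {x y : α} (hxy : H.Adj x y) :
    H.rootTransport τ y = H.rootTransport τ x * τ x y := by
  have hroot := congrArg Quot.out (ConnectedComponent.connectedComponentMk_eq_of_adj hxy).symm
  rw [rootTransport, ← Walk.phase_copy τ _ hroot rfl]
  exact hH.phase_eq_mul_of_adj τ hτ (H.pathFromRoot x)
    ⟨_, (Walk.isPath_copy _ hroot rfl).2 (H.pathFromRoot y).2⟩ hxy

theorem sum_sum_ite_mem_not_mem_adj {R : Type*} [AddCommMonoidWithOne R] [Fintype α]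
    [DecidableEq α] [DecidableRel H.Adj] (S : Finset α) :
    ∑ x, ∑ y, (if x ∈ S ∧ y ∉ S ∧ H.Adj x y then (1 : R) else 0) =
      ∑ x ∈ S, (((univ \ S).filter (H.Adj x)).card : R) := by
  rw [← Finset.sum_subset (subset_univ S) fun x _ hx => by simp [hx]]
  refine Finset.sum_congr rfl fun x hx => ?_
  simp [hx, Finset.sum_boole, Finset.filter_filter, Finset.sdiff_eq_filter]

end SimpleGraph

theorem IsMagPotential.mul_swap_eq_one {α : Type*} {G : SimpleGraph α} {σ : α → α → ℂ}
    (hσ : IsMagPotential G σ) {x y : α} (hxy : G.Adj x y) : σ x y * σ y x = 1 := by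
  have hne : σ x y ≠ 0 := norm_ne_zero_iff.1 (by simp [hσ.1 x y hxy])
  rw [hσ.2 x y hxy, mul_inv_cancel₀ hne]

structure IsUnitParallelSection {α : Type*} (G : SimpleGraph α) (σ : α → α → ℂ) (S : Finset α)
    (f : α → ℂ) : Prop where
  eq_zero : ∀ x ∉ S, f x = 0
  norm_eq_one : ∀ x ∈ S, ‖f x‖ = 1
  parallel : ∀ x ∈ S, ∀ y ∈ S, G.Adj x y → f x = σ x y * f y

theorem IsUnitParallelSection.norm_sub_sq {α : Type*} [DecidableEq α] {G : SimpleGraph α}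
    {σ : α → α → ℂ} {S : Finset α} {f : α → ℂ} (hf : IsUnitParallelSection G σ S f)
    (hσ : IsMagPotential G σ) {x y : α} (hxy : G.Adj x y) :
    ‖f x - σ x y * f y‖ ^ 2 =
      (if x ∈ S ∧ y ∉ S then 1 else 0) + (if y ∈ S ∧ x ∉ S then 1 else 0) := by
  by_cases hx : x ∈ S <;> by_cases hy : y ∈ S
  · simp [hx, hy, hf.parallel x hx y hy hxy]
  · simp [hx, hy, hf.eq_zero y hy, hf.norm_eq_one x hx]
  · simp [hx, hy, hf.eq_zero x hx, hf.norm_eq_one y hy, hσ.1 x y hxy]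
  · simp [hx, hy, hf.eq_zero x hx, hf.eq_zero y hy]

theorem IsMagPotential.exists_unitParallelSection {α : Type*} {G : SimpleGraph α}
    {σ : α → α → ℂ} (hσ : IsMagPotential G σ) {S : Finset α}
    (hS : (G.induce (S : Set α)).IsAcyclic) : ∃ f, IsUnitParallelSection G σ S f := by
  classical
  let τ : ↥(S : Set α) → ↥(S : Set α) → ℂ := fun a b => σ b a
  let T := (G.induce (S : Set α)).rootTransport τ
  have hT : ∀ a, ‖T a‖ = 1 := fun a => mem_sphere_zero_iff_norm.1 <|
    SimpleGraph.rootTransport_mem (P := Submonoid.unitSphere ℂ) τ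
      (fun a b hab => mem_sphere_zero_iff_norm.2 (hσ.1 b a hab.symm)) a
  refine ⟨fun v => if h : v ∈ S then T ⟨v, h⟩ else 0, fun x hx => dif_neg hx,
    fun x hx => by simp only [dif_pos hx, hT], fun x hx y hy hxy => ?_⟩
  simp only [dif_pos hx, dif_pos hy]
  exact (hS.rootTransport_of_adj τ (fun a b hab => hσ.mul_swap_eq_one hab.symm)
    (show (G.induce (S : Set α)).Adj ⟨y, hy⟩ ⟨x, hx⟩ from hxy.symm)).trans (mul_comm _ _)

theorem magDenom_nonneg (f : V → ℂ) : 0 ≤ magDenom f :=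
  Finset.sum_nonneg fun _ _ => by positivity

theorem magEnergy_nonneg (G : SimpleGraph V) (σ : V → V → ℂ) (f : V → ℂ) :
    0 ≤ magEnergy G σ f :=
  mul_nonneg (by norm_num) <| Finset.sum_nonneg fun _ _ => Finset.sum_nonneg fun _ _ => by
    split_ifs <;> positivity

theorem lambda1_le_rayleigh (G : SimpleGraph V) (σ : V → V → ℂ) {f : V → ℂ} (hf : f ≠ 0) :
    lambda1 G σ ≤ magEnergy G σ f / magDenom f :=
  csInf_le ⟨0, by
    rintro _ ⟨g, -, rfl⟩
    exact div_nonneg (magEnergy_nonneg G σ g) (magDenom_nonneg g)⟩ ⟨f, hf, rfl⟩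

namespace IsUnitParallelSection

variable {G : SimpleGraph V} {σ : V → V → ℂ} {S : Finset V} {f : V → ℂ}

theorem magDenom_eq (hf : IsUnitParallelSection G σ S f) : magDenom f = S.card := by
  classical
  have h : ∀ x, ‖f x‖ ^ 2 = if x ∈ S then 1 else 0 := fun x => by
    split_ifs with hx
    · simp [hf.norm_eq_one x hx]
    · simp [hf.eq_zero x hx]
  simp [magDenom, h]

theorem magEnergy_eq [DecidableEq V] [DecidableRel G.Adj] (hf : IsUnitParallelSection G σ S f)
    (hσ : IsMagPotential G σ) :
    magEnergy G σ f = ∑ x ∈ S, (((univ \ S).filter (G.Adj x)).card : ℝ) := by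
  have h : magEnergy G σ f = (1/2) * ∑ x, ∑ y,
      (if G.Adj x y then ‖f x - σ x y * f y‖ ^ 2 else 0) := by
    rw [magEnergy]; congr!
  have hterm : ∀ x y, (if G.Adj x y then ‖f x - σ x y * f y‖ ^ 2 else 0) =
      (if x ∈ S ∧ y ∉ S ∧ G.Adj x y then (1 : ℝ) else 0) +
        (if y ∈ S ∧ x ∉ S ∧ G.Adj y x then 1 else 0) := fun x y => by
    by_cases hxy : G.Adj x y
    · simp only [hxy, G.adj_symm hxy, and_true, if_true, hf.norm_sub_sq hσ hxy]
    · simp [hxy, G.adj_comm y x]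
  simp only [h, hterm, Finset.sum_add_distrib]
  rw [Finset.sum_comm (f := fun x y => if y ∈ S ∧ x ∉ S ∧ G.Adj y x then (1 : ℝ) else 0),
    G.sum_sum_ite_mem_not_mem_adj]
  ring

end IsUnitParallelSection

theorem magHeight_le_forest_isoperimetric [DecidableEq V]
    (G : SimpleGraph V) [DecidableRel G.Adj]
    (S : Finset V) (hS : S.Nonempty)
    (hforest : (G.induce (S : Set V)).IsAcyclic) :
    magHeight G ≤ (∑ x ∈ S, (((univ \ S).filter (G.Adj x)).card : ℝ)) / S.card := by
  refine Real.sSup_le ?_ (by positivity)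
  rintro _ ⟨σ, hσ, rfl⟩
  obtain ⟨f, hf⟩ := hσ.exists_unitParallelSection hforest
  obtain ⟨x, hx⟩ := hS
  have hf0 : f ≠ 0 := fun h => by simpa [h] using hf.norm_eq_one x hx
  calc lambda1 G σ ≤ magEnergy G σ f / magDenom f := lambda1_le_rayleigh G σ hf0
    _ = _ := by rw [hf.magEnergy_eq hσ, hf.magDenom_eq]
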